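/- arXiv:1402.4381 — 2 statements merged into one kernel-verified Lean document; each statement's English description precedes it below -/
import Mathlib

section
/- Consider the scalar recursion x_{k+1} = x_k − (1/L)(λ x_k + (ρ^{-1} − 1) g_k), g_{k+1} = (ρ/(ρ+1)) λ x_{k+1} + (1/(ρ+1)) g_k, with 0 < λ ≤ L and ρ > 0. Then x_k satisfies the second-order linear recurrence (1+ρ) x_{k+2} − 2(1 − λ/L + ρ/2) x_{k+1} + (1 − λ/L) x_k = 0. -/
/-- the coupled scalar OS-LALM recursion yields a second-order
linear recurrence for `x_k`. -/
theorem second_order_recurrence (lam L ρ : ℝ) (hlam : 0 < lam) (hlamL : lam ≤ L)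
    (hρ : 0 < ρ)
    (x g : ℕ → ℝ)
    (hx : ∀ k, x (k + 1) = x k - (1 / L) * (lam * x k + (ρ⁻¹ - 1) * g k))
    (hg : ∀ k, g (k + 1) = (ρ / (ρ + 1)) * (lam * x (k + 1)) + (1 / (ρ + 1)) * g k) :
    ∀ k, (1 + ρ) * x (k + 2) - 2 * (1 - lam / L + ρ / 2) * x (k + 1) +
      (1 - lam / L) * x k = 0 := by
  intro k
  have hL : (0:ℝ) < L := hlam.trans_le hlamL
  have hρ1 : ρ + 1 ≠ 0 := by positivity
  have hρ' : ρ ≠ 0 := hρ.ne'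
  have hA : (1 + ρ) * ((ρ⁻¹ - 1) * g (k + 1)) =
      (1 - ρ) * (lam * x (k + 1)) + (ρ⁻¹ - 1) * g k := by
    rw [hg k]; field_simp; ring
  have hB : (1 / L) * ((ρ⁻¹ - 1) * g k) = x k - x (k + 1) - (1 / L) * (lam * x k) := by
    have h := hx k; rw [mul_add] at h; linarith
  have h2 := hx (k + 1)
  linear_combination (1 + ρ) * h2 - (1 / L) * hA - hB
end

section
/- In the over-damped regime ρ > ρ_c = 2√(μ(1−μ)) (writing μ = λ/L ∈ (0,1)), the dominant root r_o(ρ) = (1 − μ + ρ/2 + √(ρ²/4 − μ(1−μ)))/(1 + ρ) is a non-decreasing function of ρ on (ρ_c, ∞), and r_o(ρ_c) = r_c. -/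
set_option maxHeartbeats 1000000 in

lemma key_ineq (μ a b sa sb : ℝ) (hμ0 : 0 < μ) (hμ1 : μ < 1)
    (ha : 0 < a) (hab : a ≤ b)
    (hsa : 0 ≤ sa) (hsb : 0 ≤ sb)
    (hsa2 : sa^2 = a^2/4 - μ*(1-μ)) (hsb2 : sb^2 = b^2/4 - μ*(1-μ))
    (ha2 : 4*(μ*(1-μ)) < a^2) :
    (1 - μ + a/2 + sa) * (1 + b) ≤ (1 - μ + b/2 + sb) * (1 + a) := by
  set c := μ*(1-μ) with hc_def
  have hc : 0 < c := by nlinarith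
  have hc4 : c ≤ 1/4 := by nlinarith [sq_nonneg (μ - 1/2)]
  have hb0 : 0 < b := lt_of_lt_of_le ha hab
  have hsapos : 0 < sa := by
    rcases eq_or_lt_of_le hsa with h | h
    · exfalso; rw [← h] at hsa2; nlinarith
    · exact h
  have hsbpos : 0 < sb := by
    rcases eq_or_lt_of_le hsb with h | h
    · exfalso; rw [← h] at hsb2; nlinarith
    · exact h
  have hD : 0 ≤ b^2 - a^2 := by nlinarith
  have hab4c : 0 < a*b/4 - c := by nlinarith
  have hsasb : sa*sb ≤ a*b/4 - c := by
    nlinarith [sq_nonneg (a*b/4 - c - sa*sb), sq_nonneg (a - b), mul_pos hsapos hsbpos]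
  -- key bound: (2-4μ)(sa+sb) ≤ a+b+4c
  have hQ : (2 - 4*μ)*(sa + sb) ≤ a + b + 4*c := by
    rcases le_or_gt (2 - 4*μ) 0 with h | h
    · nlinarith
    · have hsum2 : (sa + sb)^2 ≤ (a+b)^2/4 - 4*c := by nlinarith
      have hLHS : ((2 - 4*μ)*(sa+sb))^2 = 4*(1-4*c)*(sa+sb)^2 := by
        rw [hc_def]; ring
      have h14c : (0:ℝ) ≤ 1 - 4*c := by linarith
      have step1 : 4*(1-4*c)*(sa+sb)^2 ≤ 4*(1-4*c)*((a+b)^2/4 - 4*c) := by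
        apply mul_le_mul_of_nonneg_left hsum2 (by linarith)
      have step2 : 4*(1-4*c)*((a+b)^2/4 - 4*c) ≤ (a + b + 4*c)^2 := by
        have hid : (a+b+4*c)^2 - 4*(1-4*c)*((a+b)^2/4 - 4*c)
            = 4*c*(a+b+1)^2 + 12*(c*(1-4*c)) := by ring
        have k1 : 0 ≤ 4*c*(a+b+1)^2 := by positivity
        have k2 : 0 ≤ 12*(c*(1-4*c)) := by
          have := mul_nonneg hc.le h14c; linarith
        linarith
      have hsq : ((2 - 4*μ)*(sa+sb))^2 ≤ (a + b + 4*c)^2 := by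
        rw [hLHS]; linarith
      have huv : 0 < (2-4*μ)*(sa+sb) + (a+b+4*c) := by
        have := mul_pos h (by linarith : (0:ℝ) < sa+sb); linarith
      have hmul : 0 ≤ ((a+b+4*c) - (2-4*μ)*(sa+sb)) * ((a+b+4*c) + (2-4*μ)*(sa+sb)) := by
        have : ((a+b+4*c) - (2-4*μ)*(sa+sb)) * ((a+b+4*c) + (2-4*μ)*(sa+sb))
            = (a+b+4*c)^2 - ((2-4*μ)*(sa+sb))^2 := by ring
        rw [this]; linarith
      by_contra hcon
      push_neg at hcon
      have : ((a+b+4*c) - (2-4*μ)*(sa+sb)) * ((a+b+4*c) + (2-4*μ)*(sa+sb)) < 0 :=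
        mul_neg_of_neg_of_pos (by linarith) (by linarith)
      linarith
  -- identities
  have e1 : (sb - sa)*((sa+sb)*(a+b)) = (b^2-a^2)*(a+b)/4 := by
    linear_combination (a+b)*hsb2 - (a+b)*hsa2
  have e2 : (a*sb - b*sa)*(a*sb + b*sa) = c*(b^2-a^2) := by
    linear_combination a^2*hsb2 - b^2*hsa2
  have h3 : 0 ≤ a*sb - b*sa := by
    have hpos : 0 < a*sb + b*sa := by positivity
    nlinarith [mul_nonneg hc.le hD]
  have t2 : 0 ≤ (a*sb - b*sa) * ((a+b)*(sa+sb) - (a*sb + b*sa)) := by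
    have h5 : (a+b)*(sa+sb) - (a*sb + b*sa) = a*sa + b*sb := by ring
    rw [h5]
    exact mul_nonneg h3 (by positivity)
  have t3 : 0 ≤ (b^2-a^2) * ((a + b + 4*c) - (2-4*μ)*(sa+sb)) :=
    mul_nonneg hD (by linarith)
  have hKpos : 0 < (sa+sb)*(a+b) := by positivity
  have hTK : 0 ≤ ((1 - μ + b/2 + sb) * (1 + a) - (1 - μ + a/2 + sa) * (1 + b)) *
      ((sa+sb)*(a+b)) := by nlinarith [e1, e2, t2, t3]
  nlinarith [hTK, hKpos]

/-- in the over-damped regime the dominant root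
`r_o(ρ) = (1 − μ + ρ/2 + √(ρ²/4 − μ(1−μ)))/(1+ρ)` is non-decreasing on
`(ρ_c, ∞)`, and `r_o(ρ_c) = r_c`. -/
theorem overdamped_root_monotone (μ : ℝ) (hμ0 : 0 < μ) (hμ1 : μ < 1)
    (ρc : ℝ) (hρc : ρc = 2 * Real.sqrt (μ * (1 - μ)))
    (ro : ℝ → ℝ)
    (hro : ∀ ρ, ro ρ =
      (1 - μ + ρ / 2 + Real.sqrt (ρ ^ 2 / 4 - μ * (1 - μ))) / (1 + ρ))
    (rc : ℝ) (hrc : rc = (1 - μ + ρc / 2) / (1 + ρc)) :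
    MonotoneOn ro (Set.Ioi ρc) ∧ ro ρc = rc := by
  have hc : 0 < μ * (1 - μ) := by nlinarith
  have hρc0 : 0 ≤ ρc := by rw [hρc]; positivity
  have hρcsq : ρc ^ 2 = 4 * (μ * (1 - μ)) := by
    rw [hρc, mul_pow, Real.sq_sqrt hc.le]; ring
  constructor
  · intro a ha b hb hab
    simp only [Set.mem_Ioi] at ha hb
    have ha0 : 0 < a := lt_of_le_of_lt hρc0 ha
    have hb0 : 0 < b := lt_of_le_of_lt hρc0 hb
    have ha2 : 4 * (μ * (1 - μ)) < a ^ 2 := by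
      have := mul_self_lt_mul_self hρc0 ha
      nlinarith [hρcsq]
    have hb2 : 4 * (μ * (1 - μ)) < b ^ 2 := by
      have := mul_self_lt_mul_self hρc0 hb
      nlinarith [hρcsq]
    set sa := Real.sqrt (a ^ 2 / 4 - μ * (1 - μ)) with hsa_def
    set sb := Real.sqrt (b ^ 2 / 4 - μ * (1 - μ)) with hsb_def
    have hsa : 0 ≤ sa := Real.sqrt_nonneg _
    have hsb : 0 ≤ sb := Real.sqrt_nonneg _
    have hsa2 : sa ^ 2 = a ^ 2 / 4 - μ * (1 - μ) := by
      rw [hsa_def, Real.sq_sqrt (by linarith)]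
    have hsb2 : sb ^ 2 = b ^ 2 / 4 - μ * (1 - μ) := by
      rw [hsb_def, Real.sq_sqrt (by linarith)]
    rw [hro a, hro b,
      div_le_div_iff₀ (by linarith : (0:ℝ) < 1 + a) (by linarith : (0:ℝ) < 1 + b)]
    exact key_ineq μ a b sa sb hμ0 hμ1 ha0 hab hsa hsb hsa2 hsb2 ha2
  · rw [hro ρc, hrc]
    have h0 : ρc ^ 2 / 4 - μ * (1 - μ) = 0 := by rw [hρcsq]; ring
    rw [h0, Real.sqrt_zero, add_zero]
end
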